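/- arXiv:1911.03637 — 2 statements merged into one kernel-verified Lean document; each statement's English description precedes it below -/
import Mathlib

section
/- Let D1 and D2 be strongly connected digraphs with diam(D1) < diam(D2), diameters taken with respect to the maximum distance. Then Per(D1 ⊠ D2) = V(D1) × Per(D2). -/
/-!
Distances in a strong product are computed coordinatewise: the reflexive closure of the adjacency
of `D₁ ⊠ D₂` is the product of the reflexive closures of the adjacencies of `D₁` and `D₂`, and
`→d(u, v) ≤ n` says exactly that `v` is reached from `u` in `n` steps of the reflexive closure.
Hence `→d((u,v),(u',v')) = max (→d(u,u')) (→d(v,v'))`, and taking maxima, the same holds for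
the maximum distance, the eccentricity and the diameter. So `diam (D₁ ⊠ D₂) = diam D₂`, and since
`ecc u ≤ diam D₁ < diam D₂`, `ecc (u,v) = max (ecc u) (ecc v)` attains `diam D₂` exactly when
`ecc v` does.
-/

/-- A digraph on a vertex type `V`: a set of directed edges (ordered pairs of
distinct vertices), i.e. an irreflexive adjacency relation (no loops, and no
parallel edges since edges form a set). -/
structure Digr (V : Type*) where
  Adj : V → V → Prop
  loopless : ∀ v, ¬ Adj v v

namespace Digr

variable {V : Type*} {W : Type*}

/-- `D.Reaches u v` : there is a directed path (walk) from `u` to `v`. -/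
def Reaches (D : Digr V) (u v : V) : Prop :=
  ∃ (n : ℕ) (f : Fin (n + 1) → V), f 0 = u ∧ f (Fin.last n) = v ∧
    ∀ i : Fin n, D.Adj (f i.castSucc) (f i.succ)

/-- A digraph is strongly connected if every vertex reaches every vertex. -/
def StronglyConnected (D : Digr V) : Prop := ∀ u v : V, D.Reaches u v

/-- The directed distance `→d(u,v)`: the length of a shortest directed
`u`–`v` path. -/
noncomputable def ddist (D : Digr V) (u v : V) : ℕ :=
  sInf {n : ℕ | ∃ f : Fin (n + 1) → V, f 0 = u ∧ f (Fin.last n) = v ∧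
    ∀ i : Fin n, D.Adj (f i.castSucc) (f i.succ)}

/-- The maximum distance `md(u,v) = max {→d(u,v), →d(v,u)}`. -/
noncomputable def mdist (D : Digr V) (u v : V) : ℕ :=
  max (D.ddist u v) (D.ddist v u)

/-- The eccentricity of a vertex with respect to the maximum distance. -/
noncomputable def ecc [Fintype V] (D : Digr V) (u : V) : ℕ :=
  Finset.univ.sup fun v => D.mdist u v

/-- The radius with respect to the maximum distance. -/
noncomputable def rad [Fintype V] [Nonempty V] (D : Digr V) : ℕ :=
  Finset.univ.inf' Finset.univ_nonempty fun v => D.ecc v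

/-- The diameter with respect to the maximum distance. -/
noncomputable def diam [Fintype V] (D : Digr V) : ℕ :=
  Finset.univ.sup fun v => D.ecc v

/-- Out-neighbourhood. -/
def outNbhd (D : Digr V) (v : V) : Set V := {u | D.Adj v u}

/-- In-neighbourhood. -/
def inNbhd (D : Digr V) (v : V) : Set V := {u | D.Adj u v}

/-- Neighbourhood `N(v) = N⁺(v) ∪ N⁻(v)`. -/
def nbhd (D : Digr V) (v : V) : Set V := D.outNbhd v ∪ D.inNbhd v

/-- Closed neighbourhood `N[v] = N(v) ∪ {v}`. -/
def closedNbhd (D : Digr V) (v : V) : Set V := D.nbhd v ∪ {v}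

/-- The boundary `∂(D)`. -/
noncomputable def boundary (D : Digr V) : Set V :=
  {v | ∃ u : V, ∀ w ∈ D.nbhd v, D.mdist u w ≤ D.mdist u v}

/-- The contour `Ct(D)`. -/
noncomputable def contour [Fintype V] (D : Digr V) : Set V :=
  {v | ∀ u ∈ D.nbhd v, D.ecc u ≤ D.ecc v}

/-- The eccentricity set `Ecc(D)`. -/
noncomputable def eccSet [Fintype V] (D : Digr V) : Set V :=
  {v | ∃ u : V, D.ecc u = D.mdist u v}

/-- The periphery `Per(D) = {v : ecc(v) = diam(D)}`. -/
noncomputable def periphery [Fintype V] (D : Digr V) : Set V :=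
  {v | D.ecc v = D.diam}

/-- The strong product of two digraphs. -/
def strongProd (D₁ : Digr V) (D₂ : Digr W) : Digr (V × W) where
  Adj p q :=
    (D₁.Adj p.1 q.1 ∧ p.2 = q.2) ∨ (p.1 = q.1 ∧ D₂.Adj p.2 q.2) ∨
      (D₁.Adj p.1 q.1 ∧ D₂.Adj p.2 q.2)
  loopless := by
    rintro ⟨a, b⟩ (⟨h, -⟩ | ⟨-, h⟩ | ⟨h, -⟩)
    · exact D₁.loopless a h
    · exact D₂.loopless b h
    · exact D₁.loopless a h

end Digr

namespace Relation

variable {α β : Type*}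

def ReachesIn (r : α → α → Prop) (n : ℕ) (a b : α) : Prop :=
  ∃ f : Fin (n + 1) → α, f 0 = a ∧ f (Fin.last n) = b ∧
    ∀ i : Fin n, r (f i.castSucc) (f i.succ)

theorem reachesIn_zero {r : α → α → Prop} {a b : α} : ReachesIn r 0 a b ↔ a = b := by
  constructor
  · rintro ⟨f, rfl, rfl, -⟩
    rfl
  · rintro rfl
    exact ⟨fun _ => a, rfl, rfl, fun i => i.elim0⟩

theorem reachesIn_succ {r : α → α → Prop} {n : ℕ} {a b : α} :
    ReachesIn r (n + 1) a b ↔ ∃ c, r a c ∧ ReachesIn r n c b := by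
  constructor
  · rintro ⟨f, rfl, rfl, hf⟩
    refine ⟨f 1, hf 0, Fin.tail f, rfl, rfl, fun i => ?_⟩
    simpa [Fin.tail, ← Fin.succ_castSucc] using hf i.succ
  · rintro ⟨c, hac, f, rfl, rfl, hf⟩
    refine ⟨Fin.cons a f, rfl, rfl, Fin.cases hac fun i => ?_⟩
    simpa [← Fin.succ_castSucc] using hf i

theorem reachesIn_reflGen_iff {r : α → α → Prop} {n : ℕ} {a b : α} :
    ReachesIn (ReflGen r) n a b ↔ ∃ m ≤ n, ReachesIn r m a b := by
  induction n generalizing a with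
  | zero => simp [reachesIn_zero]
  | succ n ih =>
    rw [reachesIn_succ]
    constructor
    · rintro ⟨c, hac | hac, hcb⟩ <;> obtain ⟨m, hm, hcb⟩ := ih.mp hcb
      · exact ⟨m, by omega, hcb⟩
      · exact ⟨m + 1, by omega, reachesIn_succ.mpr ⟨c, hac, hcb⟩⟩
    · rintro ⟨_ | m, hm, hab⟩
      · exact ⟨a, .refl, ih.mpr ⟨0, Nat.zero_le n, hab⟩⟩
      · obtain ⟨c, hac, hcb⟩ := reachesIn_succ.mp hab
        exact ⟨c, .single hac, ih.mpr ⟨m, by omega, hcb⟩⟩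

theorem reachesIn_prod {r : α → α → Prop} {s : β → β → Prop} {n : ℕ} {p q : α × β} :
    ReachesIn (fun x y => r x.1 y.1 ∧ s x.2 y.2) n p q ↔
      ReachesIn r n p.1 q.1 ∧ ReachesIn s n p.2 q.2 := by
  induction n generalizing p with
  | zero => simp [reachesIn_zero, Prod.ext_iff]
  | succ n ih =>
    simp only [reachesIn_succ, ih]
    constructor
    · rintro ⟨c, ⟨hr, hs⟩, hcr, hcs⟩
      exact ⟨⟨c.1, hr, hcr⟩, ⟨c.2, hs, hcs⟩⟩
    · rintro ⟨⟨a, hr, har⟩, ⟨b, hs, hbs⟩⟩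
      exact ⟨(a, b), ⟨hr, hs⟩, har, hbs⟩

end Relation

theorem Finset.sup_univ_prod_sup {α β γ : Type*} [Fintype α] [Fintype β] [Nonempty α]
    [Nonempty β] [SemilatticeSup γ] [OrderBot γ] (f : α → γ) (g : β → γ) :
    univ.sup (fun p : α × β => f p.1 ⊔ g p.2) = univ.sup f ⊔ univ.sup g := by
  obtain ⟨a⟩ := ‹Nonempty α›
  obtain ⟨b⟩ := ‹Nonempty β›
  apply le_antisymm
  · exact Finset.sup_le fun p _ => sup_le_sup (le_sup (mem_univ p.1)) (le_sup (mem_univ p.2))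
  · exact sup_le (Finset.sup_le fun a' _ => le_sup_of_le (mem_univ (a', b)) le_sup_left)
      (Finset.sup_le fun b' _ => le_sup_of_le (mem_univ (a, b')) le_sup_right)

namespace Digr

open Relation

variable {V W : Type*}

theorem ddist_le_iff {D : Digr V} {u v : V} (h : D.Reaches u v) {n : ℕ} :
    D.ddist u v ≤ n ↔ ReachesIn (ReflGen D.Adj) n u v := by
  rw [reachesIn_reflGen_iff]
  constructor
  · intro hn
    exact ⟨_, hn, Nat.sInf_mem (s := {m | ReachesIn D.Adj m u v}) h⟩
  · rintro ⟨m, hm, hmuv⟩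
    exact (Nat.sInf_le hmuv).trans hm

theorem reflGen_strongProd_adj (D₁ : Digr V) (D₂ : Digr W) :
    ReflGen (D₁.strongProd D₂).Adj =
      fun p q => ReflGen D₁.Adj p.1 q.1 ∧ ReflGen D₂.Adj p.2 q.2 := by
  ext ⟨a, b⟩ ⟨a', b'⟩
  simp only [reflGen_iff, strongProd, Prod.mk.injEq]
  tauto

theorem Reaches.strongProd {D₁ : Digr V} {D₂ : Digr W} {u u' : V} {v v' : W}
    (h₁ : D₁.Reaches u u') (h₂ : D₂.Reaches v v') :
    (D₁.strongProd D₂).Reaches (u, v) (u', v') := by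
  obtain ⟨m, hm⟩ := h₁
  obtain ⟨k, hk⟩ := h₂
  have hprod : ReachesIn (ReflGen (D₁.strongProd D₂).Adj) (max m k) (u, v) (u', v') := by
    rw [reflGen_strongProd_adj, reachesIn_prod, reachesIn_reflGen_iff, reachesIn_reflGen_iff]
    exact ⟨⟨m, le_max_left m k, hm⟩, ⟨k, le_max_right m k, hk⟩⟩
  obtain ⟨n, -, hn⟩ := reachesIn_reflGen_iff.mp hprod
  exact ⟨n, hn⟩

theorem ddist_strongProd {D₁ : Digr V} {D₂ : Digr W} {u u' : V} {v v' : W}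
    (h₁ : D₁.Reaches u u') (h₂ : D₂.Reaches v v') :
    (D₁.strongProd D₂).ddist (u, v) (u', v') = max (D₁.ddist u u') (D₂.ddist v v') :=
  eq_of_forall_ge_iff fun n => by
    rw [max_le_iff, ddist_le_iff (h₁.strongProd h₂), ddist_le_iff h₁, ddist_le_iff h₂,
      reflGen_strongProd_adj, reachesIn_prod]

theorem mdist_strongProd {D₁ : Digr V} {D₂ : Digr W}
    (h₁ : D₁.StronglyConnected) (h₂ : D₂.StronglyConnected) (u u' : V) (v v' : W) :
    (D₁.strongProd D₂).mdist (u, v) (u', v') = max (D₁.mdist u u') (D₂.mdist v v') := by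
  simp only [mdist, ddist_strongProd (h₁ _ _) (h₂ _ _)]
  omega

variable [Fintype V] [Fintype W]

theorem ecc_le_diam (D : Digr V) (u : V) : D.ecc u ≤ D.diam :=
  Finset.le_sup (Finset.mem_univ u)

theorem ecc_strongProd {D₁ : Digr V} {D₂ : Digr W}
    (h₁ : D₁.StronglyConnected) (h₂ : D₂.StronglyConnected) (u : V) (v : W) :
    (D₁.strongProd D₂).ecc (u, v) = max (D₁.ecc u) (D₂.ecc v) := by
  have : Nonempty V := ⟨u⟩
  have : Nonempty W := ⟨v⟩
  simp only [ecc, mdist_strongProd h₁ h₂]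
  exact Finset.sup_univ_prod_sup _ _

theorem diam_strongProd [Nonempty V] [Nonempty W] {D₁ : Digr V} {D₂ : Digr W}
    (h₁ : D₁.StronglyConnected) (h₂ : D₂.StronglyConnected) :
    (D₁.strongProd D₂).diam = max D₁.diam D₂.diam := by
  simp only [diam, ecc_strongProd h₁ h₂]
  exact Finset.sup_univ_prod_sup _ _

end Digr

/-- if `diam(D₁) < diam(D₂)` then
`Per(D₁ ⊠ D₂) = V(D₁) × Per(D₂)`. -/
theorem periphery_strongProd_of_diam_lt {V W : Type*} [Fintype V] [Fintype W]
    (D₁ : Digr V) (D₂ : Digr W)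
    (h₁ : D₁.StronglyConnected) (h₂ : D₂.StronglyConnected)
    (hd : D₁.diam < D₂.diam) :
    (D₁.strongProd D₂).periphery = (Set.univ : Set V) ×ˢ D₂.periphery := by
  rcases isEmpty_or_nonempty V with _ | _
  · ext p
    exact isEmptyElim p.1
  have : Nonempty W := by
    by_contra hW
    simp [not_nonempty_iff.mp hW, Digr.diam] at hd
  ext ⟨u, v⟩
  simp only [Digr.periphery, Set.mem_ofPred_eq, Set.mem_prod, Set.mem_univ, true_and,
    Digr.ecc_strongProd h₁ h₂, Digr.diam_strongProd h₁ h₂]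
  have := D₁.ecc_le_diam u
  have := D₂.ecc_le_diam v
  omega
end

section
/- Let D1 and D2 be strongly connected digraphs with diam(D1) = diam(D2), diameters taken with respect to the maximum distance. Then Per(D1 ⊠ D2) = (Per(D1) × V(D2)) ∪ (V(D1) × Per(D2)). -/
namespace DigrAux

open Digr

variable {V W : Type*}

/-- ℕ-indexed walks, easier to manipulate than `Fin`-indexed ones. -/
def NWalk (D : Digr V) (u v : V) (n : ℕ) : Prop :=
  ∃ f : ℕ → V, f 0 = u ∧ f n = v ∧ ∀ i < n, D.Adj (f i) (f (i + 1))

lemma walkSet_eq (D : Digr V) (u v : V) :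
    {n : ℕ | ∃ f : Fin (n + 1) → V, f 0 = u ∧ f (Fin.last n) = v ∧
      ∀ i : Fin n, D.Adj (f i.castSucc) (f i.succ)} = {n | NWalk D u v n} := by
  ext n
  constructor
  · rintro ⟨f, h0, hl, hadj⟩
    refine ⟨fun i => f ⟨min i n, by omega⟩, ?_, ?_, ?_⟩
    · simpa using h0
    · simpa [Fin.last] using hl
    · intro i hi
      have h1 : min i n = i := by omega
      have h2 : min (i + 1) n = i + 1 := by omega
      have := hadj ⟨i, hi⟩
      simp only [Fin.castSucc, Fin.succ, Fin.castAdd, Fin.castLE] at this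
      simp only [h1, h2]
      exact this
  · rintro ⟨g, h0, hl, hadj⟩
    refine ⟨fun i => g i.val, by simpa using h0, by simpa [Fin.last] using hl, ?_⟩
    intro i
    simpa using hadj i.val i.isLt

lemma ddist_eq (D : Digr V) (u v : V) :
    D.ddist u v = sInf {n | NWalk D u v n} := by
  rw [ddist, walkSet_eq]

lemma nwalk_nonempty (D : Digr V) {u v : V} (h : D.Reaches u v) :
    ∃ n, NWalk D u v n := by
  obtain ⟨n, hn⟩ := h
  exact ⟨n, (Set.ext_iff.mp (walkSet_eq D u v) n).mp hn⟩

lemma ddist_mem (D : Digr V) {u v : V} (h : D.Reaches u v) :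
    NWalk D u v (D.ddist u v) := by
  rw [ddist_eq]
  exact Nat.sInf_mem (nwalk_nonempty D h)

lemma ddist_le (D : Digr V) {u v : V} {n : ℕ} (h : NWalk D u v n) :
    D.ddist u v ≤ n := by
  rw [ddist_eq]
  exact Nat.sInf_le h

/-- From a lazy walk (steps may stay put) we get a genuine walk of length `≤ n`. -/
lemma nwalk_of_lazy (D : Digr V) :
    ∀ n (u v : V) (f : ℕ → V), f 0 = u → f n = v →
      (∀ i < n, D.Adj (f i) (f (i + 1)) ∨ f i = f (i + 1)) →
      ∃ m ≤ n, NWalk D u v m := by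
  intro n
  induction n with
  | zero => intro u v f h0 hl _; exact ⟨0, le_refl _, f, h0, hl, by omega⟩
  | succ n ih =>
    intro u v f h0 hl hadj
    obtain ⟨m, hm, g, g0, gl, gadj⟩ :=
      ih u (f n) f h0 rfl (fun i hi => hadj i (by omega))
    rcases hadj n (by omega) with hA | hE
    · refine ⟨m + 1, by omega, fun i => if i ≤ m then g i else v, ?_, ?_, ?_⟩
      · simp [g0]
      · simp
      · intro i hi
        rcases Nat.lt_or_ge i m with h | h
        · simp only [if_pos (by omega : i ≤ m), if_pos (by omega : i + 1 ≤ m)]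
          exact gadj i (by omega)
        · have hi' : i = m := by omega
          rw [hi']
          simp only [if_pos (le_refl m), if_neg (by omega : ¬ m + 1 ≤ m)]
          rw [gl, ← hl]
          exact hA
    · exact ⟨m, by omega, g, g0, by rw [gl, hE, hl], gadj⟩

/-- Building a walk in the strong product from walks in the factors. -/
lemma nwalk_strongProd (D₁ : Digr V) (D₂ : Digr W) {u u' : V} {v v' : W}
    {n₁ n₂ : ℕ} (hf : NWalk D₁ u u' n₁) (hg : NWalk D₂ v v' n₂) :
    NWalk (D₁.strongProd D₂) (u, v) (u', v') (max n₁ n₂) := by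
  obtain ⟨f, f0, fl, fadj⟩ := hf
  obtain ⟨g, g0, gl, gadj⟩ := hg
  refine ⟨fun i => (f (min i n₁), g (min i n₂)), ?_, ?_, ?_⟩
  · simp [f0, g0]
  · simp [fl, gl]
  · intro i hi
    have hone : i < n₁ ∨ i < n₂ := by omega
    rcases Nat.lt_or_ge i n₁ with h1 | h1 <;> rcases Nat.lt_or_ge i n₂ with h2 | h2
    · refine Or.inr (Or.inr ⟨?_, ?_⟩)
      · simpa [Nat.min_eq_left (by omega : i ≤ n₁),
          Nat.min_eq_left (by omega : i + 1 ≤ n₁)] using fadj i h1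
      · simpa [Nat.min_eq_left (by omega : i ≤ n₂),
          Nat.min_eq_left (by omega : i + 1 ≤ n₂)] using gadj i h2
    · refine Or.inl ⟨?_, ?_⟩
      · simpa [Nat.min_eq_left (by omega : i ≤ n₁),
          Nat.min_eq_left (by omega : i + 1 ≤ n₁)] using fadj i h1
      · simp [Nat.min_eq_right (by omega : n₂ ≤ i),
          Nat.min_eq_right (by omega : n₂ ≤ i + 1)]
    · refine Or.inr (Or.inl ⟨?_, ?_⟩)
      · simp [Nat.min_eq_right (by omega : n₁ ≤ i),
          Nat.min_eq_right (by omega : n₁ ≤ i + 1)]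
      · simpa [Nat.min_eq_left (by omega : i ≤ n₂),
          Nat.min_eq_left (by omega : i + 1 ≤ n₂)] using gadj i h2
    · omega

lemma ddist_strongProd (D₁ : Digr V) (D₂ : Digr W)
    (h₁ : D₁.StronglyConnected) (h₂ : D₂.StronglyConnected)
    (u u' : V) (v v' : W) :
    (D₁.strongProd D₂).ddist (u, v) (u', v') =
      max (D₁.ddist u u') (D₂.ddist v v') := by
  apply le_antisymm
  · exact ddist_le _ (nwalk_strongProd D₁ D₂ (ddist_mem D₁ (h₁ u u'))
      (ddist_mem D₂ (h₂ v v')))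
  · have hne : ∃ n, NWalk (D₁.strongProd D₂) (u, v) (u', v') n :=
      ⟨_, nwalk_strongProd D₁ D₂ (ddist_mem D₁ (h₁ u u')) (ddist_mem D₂ (h₂ v v'))⟩
    have hmem : NWalk (D₁.strongProd D₂) (u, v) (u', v')
        ((D₁.strongProd D₂).ddist (u, v) (u', v')) := by
      rw [ddist_eq]; exact Nat.sInf_mem hne
    obtain ⟨F, F0, Fl, Fadj⟩ := hmem
    set m := (D₁.strongProd D₂).ddist (u, v) (u', v') with hm
    have hlazy1 : ∀ i < m, D₁.Adj ((F i).1) ((F (i + 1)).1) ∨ (F i).1 = (F (i + 1)).1 := by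
      intro i hi
      rcases Fadj i hi with ⟨h, -⟩ | ⟨h, -⟩ | ⟨h, -⟩
      · exact Or.inl h
      · exact Or.inr h
      · exact Or.inl h
    have hlazy2 : ∀ i < m, D₂.Adj ((F i).2) ((F (i + 1)).2) ∨ (F i).2 = (F (i + 1)).2 := by
      intro i hi
      rcases Fadj i hi with ⟨-, h⟩ | ⟨-, h⟩ | ⟨-, h⟩
      · exact Or.inr h
      · exact Or.inl h
      · exact Or.inl h
    obtain ⟨m₁, hm₁, hw₁⟩ := nwalk_of_lazy D₁ m u u' (fun i => (F i).1)
      (by simp [F0]) (by simp [Fl]) hlazy1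
    obtain ⟨m₂, hm₂, hw₂⟩ := nwalk_of_lazy D₂ m v v' (fun i => (F i).2)
      (by simp [F0]) (by simp [Fl]) hlazy2
    have l1 := ddist_le D₁ hw₁
    have l2 := ddist_le D₂ hw₂
    omega

lemma mdist_strongProd (D₁ : Digr V) (D₂ : Digr W)
    (h₁ : D₁.StronglyConnected) (h₂ : D₂.StronglyConnected)
    (u u' : V) (v v' : W) :
    (D₁.strongProd D₂).mdist (u, v) (u', v') =
      max (D₁.mdist u u') (D₂.mdist v v') := by
  simp only [mdist, ddist_strongProd D₁ D₂ h₁ h₂]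
  omega

lemma ecc_strongProd [Fintype V] [Fintype W] [Nonempty V] [Nonempty W]
    (D₁ : Digr V) (D₂ : Digr W)
    (h₁ : D₁.StronglyConnected) (h₂ : D₂.StronglyConnected) (u : V) (v : W) :
    (D₁.strongProd D₂).ecc (u, v) = max (D₁.ecc u) (D₂.ecc v) := by
  apply le_antisymm
  · apply Finset.sup_le
    rintro ⟨u', v'⟩ -
    rw [mdist_strongProd D₁ D₂ h₁ h₂]
    exact max_le_max (Finset.le_sup (Finset.mem_univ u'))
      (Finset.le_sup (Finset.mem_univ v'))
  · apply max_le
    · apply Finset.sup_le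
      intro u' _
      refine le_trans (le_max_left (D₁.mdist u u') (D₂.mdist v (Classical.arbitrary W))) ?_
      rw [← mdist_strongProd D₁ D₂ h₁ h₂]
      exact Finset.le_sup (Finset.mem_univ (u', Classical.arbitrary W))
    · apply Finset.sup_le
      intro v' _
      refine le_trans (le_max_right (D₁.mdist u (Classical.arbitrary V)) (D₂.mdist v v')) ?_
      rw [← mdist_strongProd D₁ D₂ h₁ h₂]
      exact Finset.le_sup (Finset.mem_univ (Classical.arbitrary V, v'))

lemma diam_strongProd [Fintype V] [Fintype W] [Nonempty V] [Nonempty W]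
    (D₁ : Digr V) (D₂ : Digr W)
    (h₁ : D₁.StronglyConnected) (h₂ : D₂.StronglyConnected) :
    (D₁.strongProd D₂).diam = max D₁.diam D₂.diam := by
  apply le_antisymm
  · apply Finset.sup_le
    rintro ⟨u, v⟩ -
    rw [ecc_strongProd D₁ D₂ h₁ h₂]
    exact max_le_max (Finset.le_sup (Finset.mem_univ u))
      (Finset.le_sup (Finset.mem_univ v))
  · apply max_le
    · apply Finset.sup_le
      intro u _
      refine le_trans (le_max_left (D₁.ecc u) (D₂.ecc (Classical.arbitrary W))) ?_
      rw [← ecc_strongProd D₁ D₂ h₁ h₂]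
      exact Finset.le_sup (Finset.mem_univ (u, Classical.arbitrary W))
    · apply Finset.sup_le
      intro v _
      refine le_trans (le_max_right (D₁.ecc (Classical.arbitrary V)) (D₂.ecc v)) ?_
      rw [← ecc_strongProd D₁ D₂ h₁ h₂]
      exact Finset.le_sup (Finset.mem_univ (Classical.arbitrary V, v))

end DigrAux

/-- if `diam(D₁) = diam(D₂)` then
`Per(D₁ ⊠ D₂) = (Per(D₁) × V(D₂)) ∪ (V(D₁) × Per(D₂))`. -/
theorem periphery_strongProd_of_diam_eq {V W : Type*} [Fintype V] [Fintype W]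
    (D₁ : Digr V) (D₂ : Digr W)
    (h₁ : D₁.StronglyConnected) (h₂ : D₂.StronglyConnected)
    (hd : D₁.diam = D₂.diam) :
    (D₁.strongProd D₂).periphery =
      (D₁.periphery ×ˢ (Set.univ : Set W)) ∪
      ((Set.univ : Set V) ×ˢ D₂.periphery) := by
  rcases isEmpty_or_nonempty V with hV | hV
  · ext ⟨u, v⟩; exact (IsEmpty.false u).elim
  rcases isEmpty_or_nonempty W with hW | hW
  · ext ⟨u, v⟩; exact (IsEmpty.false v).elim
  ext ⟨u, v⟩
  simp only [Digr.periphery, Set.mem_setOf_eq, Set.mem_union, Set.mem_prod,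
    Set.mem_univ, and_true, true_and]
  rw [DigrAux.ecc_strongProd D₁ D₂ h₁ h₂, DigrAux.diam_strongProd D₁ D₂ h₁ h₂]
  have e1 : D₁.ecc u ≤ D₁.diam := Finset.le_sup (Finset.mem_univ u)
  have e2 : D₂.ecc v ≤ D₂.diam := Finset.le_sup (Finset.mem_univ v)
  omega
end
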